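/- Let R(A', A, A'') be a recollement of abelian categories with functors i^*, i_*, i^!, j_!, j^*, j_*, and let X be a resolving subcategory of A. If i_*(i^*(X)) ⊆ X and i^* is exact, then gl.dim_{i^*X}(A') ≤ gl.dim_X(A) (in ℕ ∪ {∞}). -/

import Mathlib

open CategoryTheory CategoryTheory.Limits

namespace Paper

variable {C : Type*} [Category C] [Abelian C]

/-- A complete projective resolution: an acyclic ℤ-indexed complex of projectives
such that `Hom(P•, Q)` is exact for every projective `Q`. -/
structure IsCompleteProjectiveResolution (P : ChainComplex C ℤ) : Prop where
  projective : ∀ n : ℤ, Projective (P.X n)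
  exactAt : ∀ n : ℤ, P.ExactAt n
  homExact : ∀ (Q : C), Projective Q → ∀ (n : ℤ) (f : P.X n ⟶ Q),
    P.d (n + 1) n ≫ f = 0 → ∃ g : P.X (n - 1) ⟶ Q, P.d n (n - 1) ≫ g = f

/-- An object is Gorenstein projective if it is isomorphic to `Im (P₀ ⟶ P₋₁)`
for some complete projective resolution `P•`. -/
def IsGorensteinProjective (M : C) : Prop :=
  ∃ P : ChainComplex C ℤ, IsCompleteProjectiveResolution P ∧
    Nonempty (M ≅ Limits.image (P.d 0 (-1)))

variable {D : Type*} [Category D] [Abelian D]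

/-- A functor is weak perfect if it sends every exact complex of projective
objects to an exact complex. -/
def WeakPerfect (F : C ⥤ D) [F.Additive] : Prop :=
  ∀ P : ChainComplex C ℤ, (∀ n : ℤ, Projective (P.X n)) → (∀ n : ℤ, P.ExactAt n) →
    ∀ n : ℤ, (((F.mapHomologicalComplex (ComplexShape.down ℤ)).obj P).ExactAt n)

/-- Condition (SP2): for every complete projective resolution `P•` in the target
category and every projective `Q` in the source category, `Hom(P•, T Q)` is exact. -/
def SatisfiesSP2 (T : C ⥤ D) : Prop :=
  ∀ P : ChainComplex D ℤ, IsCompleteProjectiveResolution P →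
    ∀ (Q : C), Projective Q → ∀ (n : ℤ) (f : P.X n ⟶ T.obj Q),
      P.d (n + 1) n ≫ f = 0 → ∃ g : P.X (n - 1) ⟶ T.obj Q, P.d n (n - 1) ≫ g = f

/-- `IsRelativeSyzygy P n A M` : there exists an exact sequence
`0 → A → X_{n-1} → ⋯ → X₀ → M → 0` with every `Xᵢ` satisfying `P`
(defined by splicing short exact sequences). For `n = 0` it degenerates to `A ≅ M`. -/
def IsRelativeSyzygy (P : C → Prop) : ℕ → C → C → Prop
  | 0, A, M => Nonempty (A ≅ M)
  | n + 1, A, M => ∃ S : ShortComplex C, S.ShortExact ∧ P S.X₂ ∧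
      Nonempty (S.X₃ ≅ M) ∧ IsRelativeSyzygy P n A S.X₁

/-- A resolving class of objects: contains all projectives, closed under direct
summands, and for any short exact sequence `0 → A → B → C → 0` with `C` in the class,
`A` is in the class iff `B` is. -/
structure IsResolving (X : Set C) : Prop where
  projective_mem : ∀ P : C, Projective P → P ∈ X
  summand_mem : ∀ M ∈ X, ∀ (N : C) (s : N ⟶ M) (r : M ⟶ N), s ≫ r = 𝟙 N → N ∈ X
  two_of_three : ∀ S : ShortComplex C, S.ShortExact → S.X₃ ∈ X → (S.X₁ ∈ X ↔ S.X₂ ∈ X)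

/-- `HasResolutionLength Y n M` : there is an exact sequence
`0 → P_n → ⋯ → P₀ → M → 0` with all `Pᵢ ∈ Y` (defined by splicing). -/
def HasResolutionLength (Y : Set C) : ℕ → C → Prop
  | 0, M => ∃ P ∈ Y, Nonempty (M ≅ P)
  | n + 1, M => ∃ S : ShortComplex C, S.ShortExact ∧ S.X₂ ∈ Y ∧
      Nonempty (S.X₃ ≅ M) ∧ HasResolutionLength Y n S.X₁

/-- The `Y`-projective dimension of `M`, in `ℕ∞`. -/
noncomputable def pdim (Y : Set C) (M : C) : ℕ∞ :=
  sInf {n : ℕ∞ | ∃ m : ℕ, n = (m : ℕ∞) ∧ HasResolutionLength Y m M}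

/-- The `Y`-global dimension of the ambient category. -/
noncomputable def gldim (Y : Set C) : ℕ∞ := ⨆ M : C, pdim Y M

/-- A recollement of abelian categories. -/
structure Recollement (A₁ A₀ A₂ : Type*)
    [Category A₁] [Category A₀] [Category A₂]
    [Abelian A₁] [Abelian A₀] [Abelian A₂] where
  /-- `i^*` -/
  iStar : A₀ ⥤ A₁
  /-- `i_*` -/
  iPush : A₁ ⥤ A₀
  /-- `i^!` -/
  iShriek : A₀ ⥤ A₁
  /-- `j_!` -/
  jShriek : A₂ ⥤ A₀
  /-- `j^*` -/
  jStar : A₀ ⥤ A₂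
  /-- `j_*` -/
  jPush : A₂ ⥤ A₀
  iStar_additive : iStar.Additive
  iPush_additive : iPush.Additive
  iShriek_additive : iShriek.Additive
  jShriek_additive : jShriek.Additive
  jStar_additive : jStar.Additive
  jPush_additive : jPush.Additive
  adj₁ : iStar ⊣ iPush
  adj₂ : iPush ⊣ iShriek
  adj₃ : jShriek ⊣ jStar
  adj₄ : jStar ⊣ jPush
  iPush_full : iPush.Full
  iPush_faithful : iPush.Faithful
  jShriek_full : jShriek.Full
  jShriek_faithful : jShriek.Faithful
  jPush_full : jPush.Full
  jPush_faithful : jPush.Faithful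
  essImage_iPush : ∀ X : A₀, iPush.essImage X ↔ Limits.IsZero (jStar.obj X)

lemma hasResLen_of_iso' {C : Type*} [Category C] [Abelian C] (Y : Set C) :
    ∀ (n : ℕ) {M N : C},
    HasResolutionLength Y n M → (M ≅ N) → HasResolutionLength Y n N
  | 0, _, _, ⟨P, hP, ⟨e'⟩⟩, e => ⟨P, hP, ⟨e.symm ≪≫ e'⟩⟩
  | _ + 1, _, _, ⟨S, hS, hS2, ⟨e'⟩, hrest⟩, e => ⟨S, hS, hS2, ⟨e' ≪≫ e⟩, hrest⟩

lemma hasResLen_map' {C : Type*} [Category C] [Abelian C]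
    {D : Type*} [Category D] [Abelian D] (X : Set C) (F : C ⥤ D)
    [PreservesFiniteLimits F] [PreservesFiniteColimits F] :
    ∀ (n : ℕ) (M : C), HasResolutionLength X n M →
      HasResolutionLength {Y : D | ∃ M ∈ X, Nonempty (Y ≅ F.obj M)} n (F.obj M)
  | 0, _, ⟨P, hP, ⟨e⟩⟩ => ⟨F.obj P, ⟨P, hP, ⟨Iso.refl _⟩⟩, ⟨F.mapIso e⟩⟩
  | n + 1, _, ⟨S, hS, hS2, ⟨e⟩, hrest⟩ =>
    ⟨S.map F, hS.map_of_exact F, ⟨S.X₂, hS2, ⟨Iso.refl _⟩⟩, ⟨F.mapIso e⟩,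
      hasResLen_map' X F n S.X₁ hrest⟩

lemma pdim_le_of_map' {C : Type*} [Category C] [Abelian C]
    {D : Type*} [Category D] [Abelian D] (X : Set C) (F : C ⥤ D)
    [PreservesFiniteLimits F] [PreservesFiniteColimits F] (M : C) :
    pdim {Y : D | ∃ M ∈ X, Nonempty (Y ≅ F.obj M)} (F.obj M) ≤ pdim X M := by
  apply sInf_le_sInf
  rintro n ⟨m, rfl, hm⟩
  exact ⟨m, rfl, hasResLen_map' X F m M hm⟩

lemma pdim_le_of_iso' {C : Type*} [Category C] [Abelian C] (Y : Set C)
    {M N : C} (e : M ≅ N) : pdim Y N ≤ pdim Y M := by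
  apply sInf_le_sInf
  rintro n ⟨m, rfl, hm⟩
  exact ⟨m, rfl, hasResLen_of_iso' Y m hm e⟩

end Paper

/-- In a recollement `R(A', A, A'')` with `X` resolving in `A`,
`i_* i^* X ⊆ X` and `i^*` exact, one has `gl.dim_{i^*X} A' ≤ gl.dim_X A`. -/
theorem Paper.statement19
    {A' A A'' : Type*} [Category A'] [Category A] [Category A'']
    [Abelian A'] [Abelian A] [Abelian A'']
    [EnoughProjectives A'] [EnoughInjectives A']
    [EnoughProjectives A] [EnoughInjectives A]
    [EnoughProjectives A''] [EnoughInjectives A'']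
    (R : Recollement A' A A'')
    (X : Set A) (hX : IsResolving X)
    (h : ∀ M ∈ X, R.iPush.obj (R.iStar.obj M) ∈ X)
    [PreservesFiniteLimits R.iStar] [PreservesFiniteColimits R.iStar] :
    gldim {Y : A' | ∃ M ∈ X, Nonempty (Y ≅ R.iStar.obj M)} ≤ gldim X := by
  apply iSup_le
  intro M'
  have := R.iPush_full
  have := R.iPush_faithful
  calc pdim {Y : A' | ∃ M ∈ X, Nonempty (Y ≅ R.iStar.obj M)} M'
      ≤ pdim {Y : A' | ∃ M ∈ X, Nonempty (Y ≅ R.iStar.obj M)}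
        (R.iStar.obj (R.iPush.obj M')) :=
        pdim_le_of_iso' _ (asIso (R.adj₁.counit.app M'))
    _ ≤ pdim X (R.iPush.obj M') := pdim_le_of_map' X R.iStar _
    _ ≤ gldim X := le_iSup _ _
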